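/- Let μ be an offspring distribution with μ(1) > 0, fix k with a μ-BGW tree conditionable on k leaves, and let a be a tree with k leaves, no vertices of out-degree 1, |a| vertices, and φ_i(a) vertices with i children. Let T be a μ-BGW tree and R its reduced tree. Then P(R = a and T has n vertices and k leaves) = C(n-1, |a|-1) · μ(0)^k · μ(1)^{n-|a|} · ∏_{i≥2} μ(i)^{φ_i(a)}. -/

import Mathlib

/-- Rooted planar trees. -/
inductive PTree where
  | node : List PTree → PTree

namespace PTree

/-- Number of vertices. -/
def size : PTree → ℕ
  | .node ts => 1 + (ts.attach.map (fun t => size t.1)).sum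
decreasing_by
  have := List.sizeOf_lt_of_mem t.2
  simp only [PTree.node.sizeOf_spec]; omega

/-- Number of leaves (vertices with no children). -/
def leaves : PTree → ℕ
  | .node [] => 1
  | .node ts => (ts.attach.map (fun t => leaves t.1)).sum
decreasing_by
  have := List.sizeOf_lt_of_mem t.2
  simp only [PTree.node.sizeOf_spec]; omega

/-- BGW weight of a tree: `∏_{u ∈ τ} μ(c_u(τ))`. -/
def weight (μ : ℕ → ℝ) : PTree → ℝ
  | .node ts => μ ts.length * (ts.attach.map (fun t => weight μ t.1)).prod
decreasing_by
  have := List.sizeOf_lt_of_mem t.2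
  simp only [PTree.node.sizeOf_spec]; omega

/-- Number of vertices with exactly `i` children. -/
def countDeg (i : ℕ) : PTree → ℕ
  | .node ts => (if ts.length = i then 1 else 0) + (ts.attach.map (fun t => countDeg i t.1)).sum
decreasing_by
  have := List.sizeOf_lt_of_mem t.2
  simp only [PTree.node.sizeOf_spec]; omega

/-- Reduced tree for the leaf conditioning: erase all vertices with exactly one child. -/
def reduce : PTree → PTree
  | .node [t] => reduce t
  | .node ts => .node (ts.attach.map (fun t => reduce t.1))
decreasing_by
  · simp only [PTree.node.sizeOf_spec]; simp; omega
  · have := List.sizeOf_lt_of_mem t.2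
    simp only [PTree.node.sizeOf_spec]; omega

/-- No vertex has exactly one child. -/
def noUnary : PTree → Prop
  | .node ts => ts.length ≠ 1 ∧ ∀ t ∈ ts.attach, noUnary t.1
decreasing_by
  have := List.sizeOf_lt_of_mem t.2
  simp only [PTree.node.sizeOf_spec]; omega

end PTree

open scoped Classical

/-!
A tree reduces to `a` exactly when it is obtained from `a` by replacing each of its `|a|` edges
(the root carries a parent half-edge) by a path of unary vertices, and every inserted vertex
multiplies the BGW weight by `μ 1`. In generating-function form: the size-series of the fiber of
`reduce` over `a` is `w(a) · (X / (1 - μ(1) X)) ^ |a|`. This follows by induction on `a` from the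
decomposition at the root: a tree in the fiber over `node as` either has a unary root whose child
is again in that fiber, or its children lie in the fibers over the members of `as`, which makes
the series of the forest a product. The coefficient of `X ^ n` is
`C(n-1, |a|-1) μ(1)^(n-|a|) w(a)`, and `w(a) = μ(0)^k ∏_{i ≥ 2} μ(i)^φ_i(a)` since `a` has `k`
leaves and no unary vertex.
-/

open PowerSeries Finset.HasAntidiagonal

namespace PowerSeries

variable {R : Type*} [CommRing R]

theorem rescale_mk_one_mul_one_sub_C_mul_X (c : R) :
    rescale c (mk 1) * (1 - C c * X) = 1 := by
  rw [← rescale_X, ← map_one (rescale c), ← map_sub, ← map_mul, mk_one_mul_one_sub_eq_one, map_one]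

theorem coeff_X_mul_rescale_mk_one_pow (c : R) {s n : ℕ} (hs : 1 ≤ s) (hn : s ≤ n) :
    coeff n ((X * rescale c (mk 1)) ^ s) = (n - 1).choose (s - 1) * c ^ (n - s) := by
  obtain ⟨d, rfl⟩ := Nat.exists_eq_add_of_le' hs
  rw [mul_pow, ← map_pow, mk_one_pow_eq_mk_choose_add, coeff_X_pow_mul', if_pos hn,
    coeff_rescale, coeff_mk, mul_comm, show d + (n - (d + 1)) = n - 1 by omega, Nat.add_sub_cancel]

end PowerSeries

namespace PTree

@[induction_eliminator]
theorem induction {motive : PTree → Prop}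
    (node : ∀ ts, (∀ t ∈ ts, motive t) → motive (.node ts)) : ∀ t, motive t
  | .node ts => node ts fun t _ => induction node t

theorem node_injective : Function.Injective node := fun _ _ h => by injection h

theorem range_node : Set.range node = Set.univ :=
  Set.range_eq_univ.mpr fun | .node ts => ⟨ts, rfl⟩

@[simp]
theorem size_node (ts : List PTree) : size (.node ts) = 1 + (ts.map size).sum := by
  rw [size, List.attach_map_val]

@[simp]
theorem weight_node (μ : ℕ → ℝ) (ts : List PTree) :
    weight μ (.node ts) = μ ts.length * (ts.map (weight μ)).prod := by
  rw [weight, List.attach_map_val]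

@[simp]
theorem countDeg_node (i : ℕ) (ts : List PTree) :
    countDeg i (.node ts) = (if ts.length = i then 1 else 0) + (ts.map (countDeg i)).sum := by
  rw [countDeg, List.attach_map_val]

@[simp]
theorem leaves_node_nil : leaves (.node []) = 1 := by rw [leaves]

theorem leaves_node {ts : List PTree} (h : ts ≠ []) :
    leaves (.node ts) = (ts.map leaves).sum := by
  obtain ⟨t, ts, rfl⟩ := List.exists_cons_of_ne_nil h
  rw [leaves, List.attach_map_val]
  simp

@[simp]
theorem reduce_node_singleton (t : PTree) : reduce (.node [t]) = reduce t := by rw [reduce]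

theorem reduce_node {ts : List PTree} (h : ts.length ≠ 1) :
    reduce (.node ts) = .node (ts.map reduce) := by
  match ts, h with
  | [], _ => rw [reduce] <;> simp
  | _ :: _ :: _, _ => rw [reduce, List.attach_map_val]; simp

@[simp]
theorem noUnary_node (ts : List PTree) :
    noUnary (.node ts) ↔ ts.length ≠ 1 ∧ ∀ t ∈ ts, noUnary t := by
  rw [noUnary]; simp

theorem one_le_size (t : PTree) : 1 ≤ size t := by
  cases t; simp

theorem leaves_le_leaves_node {t : PTree} {ts : List PTree} (h : t ∈ ts) :
    leaves t ≤ leaves (.node ts) := by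
  rw [leaves_node (List.ne_nil_of_mem h)]
  exact List.le_sum_of_mem (List.mem_map_of_mem h)

theorem one_le_leaves (t : PTree) : 1 ≤ leaves t := by
  induction t with
  | node ts ih =>
    rcases ts with _ | ⟨t, ts⟩
    · simp
    · exact (ih t (by simp)).trans (leaves_le_leaves_node (by simp))

theorem length_le_leaves_node (ts : List PTree) : ts.length ≤ leaves (.node ts) := by
  rcases eq_or_ne ts [] with rfl | h
  · simp
  · rw [leaves_node h]
    simpa using List.length_le_sum_of_one_le (ts.map leaves) fun i hi => by
      obtain ⟨t, -, rfl⟩ := List.mem_map.mp hi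
      exact one_le_leaves t

theorem leaves_reduce (t : PTree) : leaves (reduce t) = leaves t := by
  induction t with
  | node ts ih =>
    match ts, ih with
    | [], _ => rw [reduce_node (by simp)]; simp
    | [t], ih => simp [ih t (by simp), leaves_node]
    | t₁ :: t₂ :: ts, ih =>
      rw [reduce_node (by simp), leaves_node (by simp), leaves_node (by simp), List.map_map]
      exact congrArg List.sum (List.map_congr_left ih)

theorem finite_setOf_size_le (n : ℕ) : {t : PTree | size t ≤ n}.Finite := by
  induction n with
  | zero =>
    convert Set.finite_empty
    simpa [Set.eq_empty_iff_forall_notMem, ← Nat.one_le_iff_ne_zero] using one_le_size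
  | succ n ih =>
    have : Finite {t // size t ≤ n} := ih.to_subtype
    refine (((List.finite_length_le {t // size t ≤ n} n).image (List.map Subtype.val)).image
      node).subset ?_
    rintro ⟨ts⟩ hts
    have hsum : (ts.map size).sum ≤ n := by simp at hts; omega
    have hle : ∀ t ∈ ts, size t ≤ n := fun t ht =>
      (List.le_sum_of_mem (List.mem_map_of_mem ht)).trans hsum
    lift ts to List {t // size t ≤ n} using hle
    refine ⟨ts.map Subtype.val, ⟨ts, ?_, rfl⟩, rfl⟩
    simpa using (List.length_le_sum_of_one_le _ fun i hi => by
      obtain ⟨t, -, rfl⟩ := List.mem_map.mp hi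
      exact one_le_size t).trans hsum

theorem finite_setOf_sum_size_le (n : ℕ) :
    {ts : List PTree | (ts.map size).sum ≤ n}.Finite :=
  ((finite_setOf_size_le (n + 1)).preimage node_injective.injOn).subset fun ts h => by
    simp at h ⊢
    omega

theorem countDeg_zero (t : PTree) : countDeg 0 t = leaves t := by
  induction t with
  | node ts ih =>
    rcases eq_or_ne ts [] with rfl | h
    · simp
    · rw [countDeg_node, leaves_node h, if_neg (by simpa using h), zero_add]
      exact congrArg List.sum (List.map_congr_left ih)

theorem countDeg_one_of_noUnary {t : PTree} (h : t.noUnary) : countDeg 1 t = 0 := by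
  induction t with
  | node ts ih =>
    rw [noUnary_node] at h
    simpa [h.1, List.sum_eq_zero_iff] using fun t ht => ih t ht (h.2 t ht)

theorem countDeg_eq_zero_of_leaves_lt {i : ℕ} {t : PTree} (h : leaves t < i) :
    countDeg i t = 0 := by
  induction t with
  | node ts ih =>
    have := length_le_leaves_node ts
    simpa [show ts.length ≠ i by omega, List.sum_eq_zero_iff] using fun t ht =>
      ih t ht ((leaves_le_leaves_node ht).trans_lt h)

theorem weight_eq_prod_pow (μ : ℕ → ℝ) (s : Finset ℕ) {t : PTree}
    (h : ∀ i ∉ s, countDeg i t = 0) : weight μ t = ∏ i ∈ s, μ i ^ countDeg i t := by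
  induction t with
  | node ts ih =>
    have hlen : ts.length ∈ s := by
      by_contra hs
      simpa using h _ hs
    have hchild : ∀ t ∈ ts, ∀ i ∉ s, countDeg i t = 0 := fun t ht i hi => by
      have := h i hi
      simp only [countDeg_node, Nat.add_eq_zero_iff, List.sum_eq_zero_iff, List.mem_map] at this
      exact this.2 _ ⟨t, ht, rfl⟩
    have hprod : ∀ l : List PTree, (l.map fun t => ∏ i ∈ s, μ i ^ countDeg i t).prod
        = ∏ i ∈ s, μ i ^ (l.map (countDeg i)).sum := fun l => by
      induction l <;> simp [*, Finset.prod_mul_distrib, pow_add]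
    simp only [weight_node, countDeg_node, pow_add, Finset.prod_mul_distrib, pow_ite, pow_one,
      pow_zero, Finset.prod_ite_eq, if_pos hlen, ← hprod]
    rw [List.map_congr_left fun t ht => ih t ht (hchild t ht)]

theorem weight_eq_of_noUnary (μ : ℕ → ℝ) {t : PTree} (h : t.noUnary) :
    weight μ t = μ 0 ^ leaves t * ∏ i ∈ Finset.Icc 2 (leaves t), μ i ^ countDeg i t := by
  rw [weight_eq_prod_pow μ (insert 0 (Finset.Icc 2 (leaves t))), Finset.prod_insert (by simp),
    countDeg_zero]
  intro i hi
  obtain rfl | hi : i = 1 ∨ leaves t < i := by simp at hi; omega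
  · exact countDeg_one_of_noUnary h
  · exact countDeg_eq_zero_of_leaves_lt hi

section Fibers

variable (μ : ℕ → ℝ)

noncomputable def fiberWeight (a : PTree) (n : ℕ) (τ : PTree) : ℝ :=
  if τ.size = n ∧ τ.reduce = a then τ.weight μ else 0

noncomputable def forestFiberWeight (as : List PTree) (n : ℕ) (ts : List PTree) : ℝ :=
  if ts.map reduce = as ∧ (ts.map size).sum = n then (ts.map (weight μ)).prod else 0

noncomputable def fiberSeries (a : PTree) : ℝ⟦X⟧ :=
  mk fun n => ∑' τ, fiberWeight μ a n τ

noncomputable def forestFiberSeries (as : List PTree) : ℝ⟦X⟧ :=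
  mk fun n => ∑' ts, forestFiberWeight μ as n ts

theorem finite_support_fiberWeight (a : PTree) (n : ℕ) :
    (Function.support (fiberWeight μ a n)).Finite :=
  (finite_setOf_size_le n).subset fun τ hτ => by
    by_contra hn
    exact hτ (if_neg fun h => hn h.1.le)

theorem finite_support_forestFiberWeight (as : List PTree) (n : ℕ) :
    (Function.support (forestFiberWeight μ as n)).Finite :=
  (finite_setOf_sum_size_le n).subset fun ts hts => by
    by_contra hn
    exact hts (if_neg fun h => hn h.2.le)

theorem summable_fiberWeight (a : PTree) (n : ℕ) : Summable (fiberWeight μ a n) :=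
  summable_of_hasFiniteSupport (finite_support_fiberWeight μ a n)

theorem summable_forestFiberWeight (as : List PTree) (n : ℕ) :
    Summable (forestFiberWeight μ as n) :=
  summable_of_hasFiniteSupport (finite_support_forestFiberWeight μ as n)

theorem fiberWeight_zero (a τ : PTree) : fiberWeight μ a 0 τ = 0 :=
  if_neg fun h => Nat.one_le_iff_ne_zero.mp (one_le_size τ) h.1

theorem fiberWeight_node_singleton (a t : PTree) (n : ℕ) :
    fiberWeight μ a (n + 1) (.node [t]) = μ 1 * fiberWeight μ a n t := by
  simp only [fiberWeight, size_node, reduce_node_singleton, weight_node]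
  split_ifs <;> simp_all <;> omega

theorem fiberWeight_node {as ts : List PTree} (h : ts.length ≠ 1) (n : ℕ) :
    fiberWeight μ (.node as) (n + 1) (.node ts) = μ as.length * forestFiberWeight μ as n ts := by
  simp only [fiberWeight, forestFiberWeight, size_node, reduce_node h, weight_node, node.injEq,
    add_comm 1, Nat.add_right_cancel_iff, and_comm]
  split_ifs with h'
  · rw [← h'.1, List.length_map]
  · simp

theorem forestFiberWeight_of_length_ne {as ts : List PTree} (h : ts.length ≠ as.length)
    (n : ℕ) : forestFiberWeight μ as n ts = 0 :=
  if_neg fun h' => h (by rw [← h'.1, List.length_map])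

theorem forestFiberWeight_cons (b u : PTree) (bs vs : List PTree) (p : ℕ) :
    forestFiberWeight μ (b :: bs) p (u :: vs)
      = ∑ ij ∈ antidiagonal p, fiberWeight μ b ij.1 u * forestFiberWeight μ bs ij.2 vs := by
  have hterm : ∀ ij : ℕ × ℕ, fiberWeight μ b ij.1 u * forestFiberWeight μ bs ij.2 vs
      = if (size u, (vs.map size).sum) = ij then
          if reduce u = b ∧ vs.map reduce = bs then weight μ u * (vs.map (weight μ)).prod else 0
        else 0 := by
    rintro ⟨i, j⟩
    simp only [fiberWeight, forestFiberWeight, Prod.mk.injEq]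
    split_ifs <;> simp_all
  rw [Finset.sum_congr rfl fun ij _ => hterm ij, Finset.sum_ite_eq]
  simp only [mem_antidiagonal, forestFiberWeight, List.map_cons,
    List.cons.injEq, List.sum_cons, List.prod_cons]
  split_ifs <;> tauto

theorem fiberSeries_node {as : List PTree} (h : as.length ≠ 1) :
    fiberSeries μ (.node as)
      = X * (C (μ 1) * fiberSeries μ (.node as) + C (μ as.length) * forestFiberSeries μ as) := by
  ext (_ | n)
  · simp [fiberSeries, fiberWeight_zero]
  rw [coeff_succ_X_mul, map_add, coeff_C_mul, coeff_C_mul]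
  simp only [fiberSeries, forestFiberSeries, coeff_mk]
  refine HasSum.tsum_eq ?_
  rw [← node_injective.hasSum_iff (by simp [range_node])]
  have hsingle : HasSum (fun ts => if ts.length = 1 then fiberWeight μ (.node as) (n + 1) (.node ts)
      else 0) (μ 1 * ∑' τ, fiberWeight μ (.node as) n τ) := by
    rw [← List.singleton_injective.hasSum_iff]
    · simpa [Function.comp_def, fiberWeight_node_singleton] using
        (summable_fiberWeight μ _ n).hasSum.mul_left (μ 1)
    · intro ts hts
      refine if_neg fun h1 => hts ?_
      obtain ⟨t, rfl⟩ := List.length_eq_one_iff.mp h1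
      exact ⟨t, rfl⟩
  convert hsingle.add ((summable_forestFiberWeight μ as n).hasSum.mul_left (μ as.length)) using 1
  funext ts
  by_cases hts : ts.length = 1
  · simp [hts, forestFiberWeight_of_length_ne μ (hts.trans_ne h.symm)]
  · simp [hts, fiberWeight_node μ hts]

theorem forestFiberSeries_nil : forestFiberSeries μ [] = 1 := by
  ext n
  rw [forestFiberSeries, coeff_mk, coeff_one, tsum_eq_single ([] : List PTree)]
  · simp [forestFiberWeight, eq_comm]
  · intro ts hts
    exact forestFiberWeight_of_length_ne μ (by simpa using hts) n

theorem forestFiberSeries_cons (b : PTree) (bs : List PTree) :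
    forestFiberSeries μ (b :: bs) = fiberSeries μ b * forestFiberSeries μ bs := by
  ext p
  simp only [forestFiberSeries, fiberSeries, coeff_mul, coeff_mk]
  refine HasSum.tsum_eq ?_
  have hprod : ∀ ij ∈ antidiagonal p, HasSum
      (fun x : PTree × List PTree => fiberWeight μ b ij.1 x.1 * forestFiberWeight μ bs ij.2 x.2)
      ((∑' τ, fiberWeight μ b ij.1 τ) * ∑' ts, forestFiberWeight μ bs ij.2 ts) := by
    intro ij _
    refine (summable_fiberWeight μ b ij.1).hasSum.mul
      (summable_forestFiberWeight μ bs ij.2).hasSum (summable_of_hasFiniteSupport ?_)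
    refine ((finite_support_fiberWeight μ b ij.1).prod
      (finite_support_forestFiberWeight μ bs ij.2)).subset fun x hx => ?_
    exact ⟨left_ne_zero_of_mul hx, right_ne_zero_of_mul hx⟩
  have hcons : Function.Injective fun x : PTree × List PTree => x.1 :: x.2 :=
    fun x y h => Prod.ext (List.cons.inj h).1 (List.cons.inj h).2
  rw [← hcons.hasSum_iff]
  · simpa [Function.comp_def, forestFiberWeight_cons] using hasSum_sum hprod
  · rintro (_ | ⟨u, vs⟩) h
    · exact forestFiberWeight_of_length_ne μ (by simp) p
    · exact absurd ⟨(u, vs), rfl⟩ h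

theorem forestFiberSeries_eq_prod (as : List PTree) :
    forestFiberSeries μ as = (as.map (fiberSeries μ)).prod := by
  induction as with
  | nil => exact forestFiberSeries_nil μ
  | cons b bs ih => rw [forestFiberSeries_cons, ih, List.map_cons, List.prod_cons]

theorem fiberSeries_of_noUnary {a : PTree} (ha : a.noUnary) :
    fiberSeries μ a = C (a.weight μ) * (X * rescale (μ 1) (mk 1)) ^ a.size := by
  induction a with
  | node as ih =>
    rw [noUnary_node] at ha
    set g := rescale (μ 1) (mk 1)
    have hprod : ∀ l : List PTree, (l.map fun b => C (b.weight μ) * (X * g) ^ b.size).prod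
        = C ((l.map (weight μ)).prod) * (X * g) ^ (l.map size).sum := fun l => by
      induction l with
      | nil => simp
      | cons b l ih => simp only [List.map_cons, List.prod_cons, List.sum_cons, ih, map_mul]; ring
    have hF := fiberSeries_node μ ha.1
    rw [forestFiberSeries_eq_prod, List.map_congr_left fun b hb => ih b hb (ha.2 b hb),
      hprod] at hF
    rw [weight_node, size_node, map_mul]
    linear_combination g * hF -
      fiberSeries μ (.node as) * rescale_mk_one_mul_one_sub_C_mul_X (μ 1)

end Fibers

end PTree

theorem stmt_14_general (μ : ℕ → ℝ) (n k : ℕ) (a : PTree) (ha_leaves : a.leaves = k) (ha : a.noUnary)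
    (han : a.size ≤ n) :
    (∑' τ : PTree, if τ.size = n ∧ τ.leaves = k ∧ τ.reduce = a then τ.weight μ else 0)
      = (Nat.choose (n - 1) (a.size - 1) : ℝ) * μ 0 ^ k * μ 1 ^ (n - a.size) *
        ∏ i ∈ Finset.Icc 2 k, μ i ^ a.countDeg i := by
  have hfiber : (∑' τ : PTree, if τ.size = n ∧ τ.leaves = k ∧ τ.reduce = a then τ.weight μ else 0)
      = coeff n (PTree.fiberSeries μ a) := by
    rw [PTree.fiberSeries, coeff_mk]
    refine tsum_congr fun τ => if_congr (and_congr_right fun _ => ?_) rfl rfl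
    exact and_iff_right_of_imp fun h => by rw [← PTree.leaves_reduce, h, ha_leaves]
  rw [hfiber, PTree.fiberSeries_of_noUnary μ ha, coeff_C_mul,
    coeff_X_mul_rescale_mk_one_pow _ (PTree.one_le_size a) han, PTree.weight_eq_of_noUnary μ ha,
    ha_leaves]
  ring

/-- For an offspring distribution `μ` with `μ(1) > 0`, a `μ`-BGW tree `T` with reduced tree
`R`, and a tree `a` with `k` leaves and no out-degree-one vertex:
`P(R = a, T ∈ 𝕋ⁿᵏ) = C(n-1,|a|-1)·μ(0)^k·μ(1)^{n-|a|}·∏_{i≥2} μ(i)^{φ_i(a)}`. -/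
theorem stmt_14 (μ : ℕ → ℝ) (hpos : ∀ i, 0 ≤ μ i) (hsum : HasSum μ 1) (hμ1 : 0 < μ 1)
    (n k : ℕ) (hk : 1 ≤ k) (a : PTree) (ha_leaves : a.leaves = k) (ha : a.noUnary)
    (han : a.size ≤ n) :
    (∑' τ : PTree, if τ.size = n ∧ τ.leaves = k ∧ τ.reduce = a then τ.weight μ else 0)
      = (Nat.choose (n - 1) (a.size - 1) : ℝ) * μ 0 ^ k * μ 1 ^ (n - a.size) *
        ∏ i ∈ Finset.Icc 2 k, μ i ^ a.countDeg i :=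
  stmt_14_general μ n k a ha_leaves ha han
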